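/- arXiv:2003.09897 — 4 statements merged into one kernel-verified Lean document; each statement's English description precedes it below -/
import Mathlib

section
/- There exists r₀ > 0 such that for every real r with 0 < r < r₀, the contour integral (1/(2πi)) ∮_{|z|=r} tan(2z)/(tan z)^6 dz over the counterclockwise circle of radius r centered at 0 equals 2; equivalently, the residue at z = 0 of the meromorphic function z ↦ tan(2z)/(tan z)^6 equals 2. -/
open Complex

/-!
With `t = tan z` one has `tan 2z / tan⁶ z = 2 / (t⁵ (1 - t²))
= 2 cot⁵ z + 2 cot³ z + 2 cot z + tan 2z`. Away from `2 / z`, this has the explicit primitive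
`-cot⁴ z / 2 + 2 log (sin z / z) - log (cos 2z) / 2`, which is single-valued on small punctured
discs because `sin z / z` and `cos 2z` stay close to `1` there. Hence the integral over a small
circle is that of `2 / z`, namely `4πi`.
-/

open Filter Topology Metric

theorem Metric.exists_pos_forall_sphere_of_eventually_nhdsNE {α : Type*} [MetricSpace α]
    {c : α} {P : α → Prop} (h : ∀ᶠ z in 𝓝[≠] c, P z) :
    ∃ r₀ : ℝ, 0 < r₀ ∧ ∀ r : ℝ, 0 < r → r < r₀ → ∀ z ∈ sphere c r, P z := by
  obtain ⟨ε, hε, hP⟩ := Metric.eventually_nhds_iff.1 (eventually_nhdsWithin_iff.1 h)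
  refine ⟨ε, hε, fun r hr hrε z hz => hP ?_ (ne_of_mem_sphere hz hr.ne')⟩
  rwa [mem_sphere.1 hz]

theorem circleIntegral_eq_of_hasDerivAt_sub_inv {f F : ℂ → ℂ} {c a : ℂ} {R : ℝ} (hR : 0 < R)
    (hf : ContinuousOn f (sphere c R))
    (hF : ∀ z ∈ sphere c R, HasDerivAt F (f z - a * (z - c)⁻¹) z) :
    (∮ z in C(c, R), f z) = 2 * Real.pi * I * a := by
  have hpole : ContinuousOn (fun z => a * (z - c)⁻¹) (sphere c R) := fun z hz =>
    (continuousAt_const.mul ((continuousAt_id.sub continuousAt_const).inv₀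
      (sub_ne_zero.2 (ne_of_mem_sphere hz hR.ne')))).continuousWithinAt
  have hexact : (∮ z in C(c, R), f z - a * (z - c)⁻¹) = 0 :=
    circleIntegral.integral_eq_zero_of_hasDerivWithinAt hR.le fun z hz =>
      (hF z hz).hasDerivWithinAt
  rw [circleIntegral.integral_sub (hf.circleIntegrable hR.le) (hpole.circleIntegrable hR.le),
    circleIntegral.integral_const_mul, circleIntegral.integral_sub_center_inv c hR.ne',
    sub_eq_zero] at hexact
  rw [hexact, mul_comm]

namespace Complex

theorem hasDerivAt_cot {z : ℂ} (h : sin z ≠ 0) : HasDerivAt cot (-(1 / sin z ^ 2)) z := by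
  rw [show (cot : ℂ → ℂ) = fun w => cos w / sin w from funext cot_eq_cos_div_sin]
  refine ((hasDerivAt_cos z).div (hasDerivAt_sin z) h).congr_deriv ?_
  rw [← sin_sq_add_cos_sq z]
  ring

theorem tan_two_mul_div_tan_pow_six {z : ℂ} (hs : sin z ≠ 0) (hc : cos z ≠ 0)
    (hc₂ : cos (2 * z) ≠ 0) :
    tan (2 * z) / tan z ^ 6 = 2 * cot z ^ 5 + 2 * cot z ^ 3 + 2 * cot z + tan (2 * z) := by
  rw [cos_two_mul'] at hc₂
  rw [tan_eq_sin_div_cos, tan_eq_sin_div_cos, cot_eq_cos_div_sin, sin_two_mul, cos_two_mul']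
  field_simp
  ring

theorem hasDerivAt_neg_cot_pow_four_div_two {z : ℂ} (h : sin z ≠ 0) :
    HasDerivAt (fun w => -(cot w ^ 4 / 2)) (2 * cot z ^ 5 + 2 * cot z ^ 3) z := by
  have hcsc : 1 / sin z ^ 2 = 1 + cot z ^ 2 := by
    rw [cot_eq_cos_div_sin]
    field_simp
    linear_combination -sin_sq_add_cos_sq z
  refine (((hasDerivAt_cot h).pow 4).div_const 2).neg.congr_deriv ?_
  rw [hcsc]
  ring

theorem hasDerivAt_log_sin_div_self {z : ℂ} (hz : z ≠ 0) (h : sin z / z ∈ slitPlane) :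
    HasDerivAt (fun w => log (sin w / w)) (cot z - z⁻¹) z := by
  have hs : sin z ≠ 0 := (div_ne_zero_iff.1 (slitPlane_ne_zero h)).1
  refine (((hasDerivAt_sin z).div (hasDerivAt_id z) hz).clog h).congr_deriv ?_
  simp only [Pi.div_apply, id, cot_eq_cos_div_sin]
  field_simp

theorem hasDerivAt_log_cos_two_mul {z : ℂ} (h : cos (2 * z) ∈ slitPlane) :
    HasDerivAt (fun w => log (cos (2 * w))) (-(2 * tan (2 * z))) z := by
  have hcos : HasDerivAt (fun w => cos (2 * w)) (-sin (2 * z) * (2 * 1)) z :=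
    ((hasDerivAt_id z).const_mul 2).ccos
  refine (hcos.clog h).congr_deriv ?_
  rw [tan_eq_sin_div_cos]
  ring

theorem tendsto_sin_div_self_nhdsNE_zero :
    Tendsto (fun z : ℂ => sin z / z) (𝓝[≠] 0) (𝓝 1) := by
  have := hasDerivAt_iff_tendsto_slope.1 (hasDerivAt_sin 0)
  simpa [slope_fun_def_field, div_eq_inv_mul] using this

theorem eventually_cos_mem_slitPlane : ∀ᶠ z in 𝓝 (0 : ℂ), cos z ∈ slitPlane :=
  (continuous_cos.tendsto' 0 1 cos_zero).eventually
    (isOpen_slitPlane.mem_nhds one_mem_slitPlane)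

theorem continuousAt_tan_two_mul_div_tan_pow_six {z : ℂ} (hs : sin z ≠ 0) (hc : cos z ≠ 0)
    (hc₂ : cos (2 * z) ≠ 0) : ContinuousAt (fun w => tan (2 * w) / tan w ^ 6) z := by
  have htan : tan z ^ 6 ≠ 0 := by
    rw [tan_eq_sin_div_cos]
    exact pow_ne_zero _ (div_ne_zero hs hc)
  exact ((continuousAt_tan.2 hc₂).comp (continuous_const_mul 2).continuousAt).div
    ((continuousAt_tan.2 hc).pow 6) htan

theorem hasDerivAt_antideriv_tan_two_mul_div_tan_pow_six {z : ℂ} (hz : z ≠ 0)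
    (hsl : sin z / z ∈ slitPlane) (hc : cos z ≠ 0) (hcl : cos (2 * z) ∈ slitPlane) :
    HasDerivAt (fun w => -(cot w ^ 4 / 2) + 2 * log (sin w / w) - log (cos (2 * w)) / 2)
      (tan (2 * z) / tan z ^ 6 - 2 * z⁻¹) z := by
  have hs : sin z ≠ 0 := (div_ne_zero_iff.1 (slitPlane_ne_zero hsl)).1
  rw [tan_two_mul_div_tan_pow_six hs hc (slitPlane_ne_zero hcl)]
  exact (((hasDerivAt_neg_cot_pow_four_div_two hs).add
    ((hasDerivAt_log_sin_div_self hz hsl).const_mul 2)).sub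
    ((hasDerivAt_log_cos_two_mul hcl).div_const 2)).congr_deriv (by ring)

end Complex

/-- There exists `r₀ > 0` such that for every `0 < r < r₀`, the contour integral
`(1/(2πi)) ∮_{|z|=r} tan(2z)/(tan z)^6 dz` over the counterclockwise circle of radius `r`
centered at `0` equals `2`; i.e. the residue at `z = 0` of `z ↦ tan(2z)/(tan z)^6` is `2`. -/
theorem residue_tan_two_div_tan_pow_six_eq_two :
    ∃ r₀ : ℝ, 0 < r₀ ∧ ∀ r : ℝ, 0 < r → r < r₀ →
      (2 * Real.pi * Complex.I)⁻¹ *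
        (∮ z in C(0, r), Complex.tan (2 * z) / Complex.tan z ^ 6) = 2 := by
  have hsmall : ∀ᶠ z in 𝓝[≠] (0 : ℂ),
      sin z / z ∈ slitPlane ∧ cos z ∈ slitPlane ∧ cos (2 * z) ∈ slitPlane :=
    (tendsto_sin_div_self_nhdsNE_zero.eventually
      (isOpen_slitPlane.mem_nhds one_mem_slitPlane)).and <| nhdsWithin_le_nhds <|
      eventually_cos_mem_slitPlane.and <|
        ((continuous_const_mul 2).tendsto' 0 0 (mul_zero 2)).eventually
          eventually_cos_mem_slitPlane
  obtain ⟨r₀, hr₀, hgood⟩ := exists_pos_forall_sphere_of_eventually_nhdsNE hsmall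
  refine ⟨r₀, hr₀, fun r hr hrr => ?_⟩
  have hcont : ContinuousOn (fun z => tan (2 * z) / tan z ^ 6) (sphere 0 r) := fun z hz => by
    obtain ⟨hsl, hc, hcl⟩ := hgood r hr hrr z hz
    exact (continuousAt_tan_two_mul_div_tan_pow_six
      (div_ne_zero_iff.1 (slitPlane_ne_zero hsl)).1 (slitPlane_ne_zero hc)
      (slitPlane_ne_zero hcl)).continuousWithinAt
  have hprim : ∀ z ∈ sphere (0 : ℂ) r,
      HasDerivAt _ (tan (2 * z) / tan z ^ 6 - 2 * (z - 0)⁻¹) z := fun z hz => by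
    obtain ⟨hsl, hc, hcl⟩ := hgood r hr hrr z hz
    rw [sub_zero]
    exact hasDerivAt_antideriv_tan_two_mul_div_tan_pow_six
      (ne_of_mem_sphere hz hr.ne') hsl (slitPlane_ne_zero hc) hcl
  rw [circleIntegral_eq_of_hasDerivAt_sub_inv hr hcont hprim]
  field_simp
end

section
/- For every real x ≥ 0, every real ε with 0 < ε < 1, and every real δ > 0, one has x^ε ≤ δ^{(ε−1)/ε} · x + δ · ε^{1/(1−ε)} · (1/ε − 1). -/
/-! Weighted AM–GM with weights `ε, 1 - ε`, applied to `s x` and `s ^ (-ε / (1 - ε))`, gives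
`x ^ ε ≤ ε s x + (1 - ε) s ^ (-ε / (1 - ε))` for every `s > 0`; the theorem is the case
`s = δ ^ ((ε - 1) / ε) / ε`. -/

open Real

theorem Real.rpow_le_mul_add_rpow {x ε s : ℝ} (hx : 0 ≤ x) (hε₀ : 0 < ε) (hε₁ : ε < 1)
    (hs : 0 < s) : x ^ ε ≤ ε * s * x + (1 - ε) * s ^ (-ε / (1 - ε)) := by
  have h1ε : 1 - ε ≠ 0 := by linarith
  have hprod : (s * x) ^ ε * (s ^ (-ε / (1 - ε))) ^ (1 - ε) = x ^ ε := by
    rw [mul_rpow hs.le hx, ← rpow_mul hs.le, div_mul_cancel₀ _ h1ε, mul_right_comm,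
      ← rpow_add hs, add_neg_cancel, rpow_zero, one_mul]
  calc x ^ ε = (s * x) ^ ε * (s ^ (-ε / (1 - ε))) ^ (1 - ε) := hprod.symm
    _ ≤ ε * (s * x) + (1 - ε) * s ^ (-ε / (1 - ε)) :=
      geom_mean_le_arith_mean2_weighted hε₀.le (by linarith) (by positivity) (by positivity)
        (by ring)
    _ = ε * s * x + (1 - ε) * s ^ (-ε / (1 - ε)) := by ring

theorem Real.rpow_one_div_one_sub {ε : ℝ} (hε₀ : 0 < ε) (hε₁ : ε ≠ 1) :
    ε ^ (1 / (1 - ε)) = ε * ε ^ (ε / (1 - ε)) := by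
  have h1ε : 1 - ε ≠ 0 := sub_ne_zero.2 hε₁.symm
  rw [← rpow_one_add' hε₀.le (by field_simp; simpa using h1ε)]
  congr 1
  field_simp
  ring

/-- For every real `x ≥ 0`, every real `ε` with `0 < ε < 1`, and every real `δ > 0`,
one has `x^ε ≤ δ^((ε−1)/ε) · x + δ · ε^(1/(1−ε)) · (1/ε − 1)`. -/
theorem young_type_inequality (x ε δ : ℝ) (hx : 0 ≤ x) (hε₀ : 0 < ε) (hε₁ : ε < 1)
    (hδ : 0 < δ) :
    x ^ ε ≤ δ ^ ((ε - 1) / ε) * x + δ * ε ^ (1 / (1 - ε)) * (1 / ε - 1) := by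
  have h1ε : 1 - ε ≠ 0 := by linarith
  set s := δ ^ ((ε - 1) / ε) / ε
  have hs_rpow : s ^ (-ε / (1 - ε)) = δ * ε ^ (ε / (1 - ε)) := by
    have hexp : (ε - 1) / ε * (-ε / (1 - ε)) = 1 := by
      field_simp
      ring
    rw [div_rpow (by positivity) hε₀.le, ← rpow_mul hδ.le, hexp, rpow_one, neg_div,
      rpow_neg hε₀.le, div_inv_eq_mul]
  calc x ^ ε ≤ ε * s * x + (1 - ε) * s ^ (-ε / (1 - ε)) :=
        rpow_le_mul_add_rpow hx hε₀ hε₁ (by positivity)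
    _ = δ ^ ((ε - 1) / ε) * x + δ * ε ^ (1 / (1 - ε)) * (1 / ε - 1) := by
        rw [mul_div_cancel₀ _ hε₀.ne', hs_rpow, rpow_one_div_one_sub hε₀ hε₁.ne]
        field_simp
end

section
/- In SL(2,ℤ), the subgroup Γ₀(2) is generated by the two matrices T = [[1,1],[0,1]] and S T² S T = [[−1,−1],[2,1]], where S = [[0,−1],[1,0]]. -/
open Matrix

/-- `T = [[1,1],[0,1]]` in `SL(2,ℤ)`. -/
def Tmat : Matrix.SpecialLinearGroup (Fin 2) ℤ :=
  ⟨!![1, 1; 0, 1], by simp [Matrix.det_fin_two_of]⟩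

/-- `S T² S T = [[−1,−1],[2,1]]` in `SL(2,ℤ)`, where `S = [[0,−1],[1,0]]`. -/
def ST2STmat : Matrix.SpecialLinearGroup (Fin 2) ℤ :=
  ⟨!![-1, -1; 2, 1], by norm_num [Matrix.det_fin_two_of]⟩

/-!
With `L = [[1,0],[2,1]]` we have `(S T² S T)² = -1` and `L = -T (S T² S T)⁻¹`, so it suffices
to reach every `γ = [[a,b],[c,d]] ∈ Γ₀(2)` from `T`, `L` and `-1`. Left multiplication by
`T ^ n` replaces `a` by `a + n c`, and by `L ^ n` replaces `c` by `c + 2 n a`. Since `a` is odd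
and `c` is even, `|a| ≠ |c|`, so while `c ≠ 0` one of these moves with `n = ±1` decreases
`|a| + |c|`. Once `c = 0`, `γ = ±T ^ b`.
-/

open scoped MatrixGroups
open ModularGroup CongruenceSubgroup

theorem exists_natAbs_add_mul_lt_or {a c : ℤ} (ha : Odd a) (hc : Even c) (hc0 : c ≠ 0) :
    ∃ n : ℤ, (a + n * c).natAbs < a.natAbs ∨ (2 * n * a + c).natAbs < c.natAbs := by
  obtain ⟨k, rfl⟩ := ha
  obtain ⟨l, rfl⟩ := hc
  by_contra! h
  have h₁ := h 1
  have h₂ := h (-1)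
  omega

theorem mem_Gamma0_two_iff {γ : SL(2, ℤ)} : γ ∈ Gamma0 2 ↔ 2 ∣ γ 1 0 := by
  rw [Gamma0_mem]
  exact ZMod.intCast_zmod_eq_zero_iff_dvd _ 2

theorem odd_apply_zero_zero_of_mem_Gamma0_two {γ : SL(2, ℤ)} (hγ : γ ∈ Gamma0 2) :
    Odd (γ 0 0) := by
  have hdet : γ 0 0 * γ 1 1 = 1 + γ 0 1 * γ 1 0 := by
    have := γ.det_coe
    rw [det_fin_two] at this
    linarith
  have hc : Even (γ 1 0) := even_iff_two_dvd.2 (mem_Gamma0_two_iff.1 hγ)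
  have hodd : Odd (γ 0 0 * γ 1 1) := hdet ▸ odd_one.add_even (hc.mul_left _)
  exact (Int.odd_mul.1 hodd).1

theorem Tmat_eq_T : Tmat = T := rfl

theorem T_mem_Gamma0 (N : ℕ) : T ∈ Gamma0 N := Gamma0_mem.2 (by simp)

theorem T_zpow_mul_apply_zero_zero (n : ℤ) (γ : SL(2, ℤ)) :
    (T ^ n * γ) 0 0 = γ 0 0 + n * γ 1 0 := by
  simp [coe_T_zpow, Matrix.mul_apply, Fin.sum_univ_two]

theorem T_zpow_mul_apply_one_zero (n : ℤ) (γ : SL(2, ℤ)) : (T ^ n * γ) 1 0 = γ 1 0 :=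
  congrFun (T_pow_mul_apply_one n γ) 0

theorem eq_T_zpow_or_eq_neg_T_zpow_of_apply_one_zero_eq_zero {γ : SL(2, ℤ)} (hc : γ 1 0 = 0) :
    γ = T ^ γ 0 1 ∨ γ = -T ^ (-γ 0 1) := by
  have had : γ 0 0 * γ 1 1 = 1 := by
    have := γ.det_coe
    rw [det_fin_two, hc] at this
    linarith
  rcases Int.eq_one_or_neg_one_of_mul_eq_one' had with ⟨ha, hd⟩ | ⟨ha, hd⟩
  · left
    ext i j
    fin_cases i <;> fin_cases j <;> simp [ha, hc, hd, coe_T_zpow]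
  · right
    ext i j
    fin_cases i <;> fin_cases j <;> simp [ha, hc, hd, coe_T_zpow]

def Lmat : SL(2, ℤ) := ⟨!![1, 0; 2, 1], by norm_num [Matrix.det_fin_two_of]⟩

theorem coe_Lmat : ↑Lmat = !![(1 : ℤ), 0; 2, 1] := rfl

theorem coe_Lmat_zpow (n : ℤ) : ↑(Lmat ^ n) = !![(1 : ℤ), 0; 2 * n, 1] := by
  induction n with
  | zero => simp [Matrix.one_fin_two]
  | succ n h =>
    rw [_root_.zpow_add, zpow_one, Matrix.SpecialLinearGroup.coe_mul, h, coe_Lmat,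
      Matrix.mul_fin_two]
    congrm !![_, _; ?_, _]
    ring
  | pred n h =>
    rw [_root_.zpow_sub, zpow_one, Matrix.SpecialLinearGroup.coe_mul, h,
      Matrix.SpecialLinearGroup.coe_inv, coe_Lmat, adjugate_fin_two_of, Matrix.mul_fin_two]
    congrm !![?_, ?_; ?_, ?_] <;> ring

theorem Lmat_zpow_mul_apply_zero_zero (n : ℤ) (γ : SL(2, ℤ)) :
    (Lmat ^ n * γ) 0 0 = γ 0 0 := by
  simp [coe_Lmat_zpow, Matrix.mul_apply, Fin.sum_univ_two]

theorem Lmat_zpow_mul_apply_one_zero (n : ℤ) (γ : SL(2, ℤ)) :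
    (Lmat ^ n * γ) 1 0 = 2 * n * γ 0 0 + γ 1 0 := by
  simp [coe_Lmat_zpow, Matrix.mul_apply, Fin.sum_univ_two]

theorem Lmat_mem_Gamma0_two : Lmat ∈ Gamma0 2 := Gamma0_mem.2 (by decide)

theorem ST2STmat_sq : ST2STmat ^ 2 = -1 := by decide

theorem Lmat_eq : Lmat = -(Tmat * ST2STmat⁻¹) := by decide

theorem T_mem_closure : T ∈ Subgroup.closure {Tmat, ST2STmat} :=
  Tmat_eq_T ▸ Subgroup.subset_closure (Set.mem_insert _ _)

theorem ST2STmat_mem_closure : ST2STmat ∈ Subgroup.closure {Tmat, ST2STmat} :=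
  Subgroup.subset_closure (Set.mem_insert_of_mem _ rfl)

theorem neg_one_mem_closure : -1 ∈ Subgroup.closure {Tmat, ST2STmat} :=
  ST2STmat_sq ▸ pow_mem ST2STmat_mem_closure 2

theorem Lmat_mem_closure : Lmat ∈ Subgroup.closure {Tmat, ST2STmat} := by
  rw [Lmat_eq, neg_eq_neg_one_mul]
  exact mul_mem neg_one_mem_closure (mul_mem T_mem_closure (inv_mem ST2STmat_mem_closure))

theorem mem_closure_of_apply_one_zero_eq_zero {γ : SL(2, ℤ)} (hc : γ 1 0 = 0) :
    γ ∈ Subgroup.closure {Tmat, ST2STmat} := by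
  rcases eq_T_zpow_or_eq_neg_T_zpow_of_apply_one_zero_eq_zero hc with h | h <;> rw [h]
  · exact zpow_mem T_mem_closure _
  · rw [neg_eq_neg_one_mul]
    exact mul_mem neg_one_mem_closure (zpow_mem T_mem_closure _)

theorem Gamma0_two_le_closure : Gamma0 2 ≤ Subgroup.closure {Tmat, ST2STmat} := by
  intro γ hγ
  induction hs : (γ 0 0).natAbs + (γ 1 0).natAbs using Nat.strong_induction_on
    generalizing γ with
  | _ s ih =>
  by_cases hc : γ 1 0 = 0
  · exact mem_closure_of_apply_one_zero_eq_zero hc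
  obtain ⟨n, hlt | hlt⟩ := exists_natAbs_add_mul_lt_or
    (odd_apply_zero_zero_of_mem_Gamma0_two hγ) (even_iff_two_dvd.2 (mem_Gamma0_two_iff.1 hγ)) hc
  · have h : T ^ n * γ ∈ Subgroup.closure {Tmat, ST2STmat} := ih _
      (by rw [← hs, T_zpow_mul_apply_zero_zero, T_zpow_mul_apply_one_zero]; omega)
      (mul_mem (zpow_mem (T_mem_Gamma0 2) n) hγ) rfl
    simpa using mul_mem (zpow_mem T_mem_closure (-n)) h
  · have h : Lmat ^ n * γ ∈ Subgroup.closure {Tmat, ST2STmat} := ih _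
      (by rw [← hs, Lmat_zpow_mul_apply_zero_zero, Lmat_zpow_mul_apply_one_zero]; omega)
      (mul_mem (zpow_mem Lmat_mem_Gamma0_two n) hγ) rfl
    simpa using mul_mem (zpow_mem Lmat_mem_closure (-n)) h

theorem closure_Tmat_ST2STmat_eq_Gamma0_two :
    Subgroup.closure {Tmat, ST2STmat} = Gamma0 2 := by
  refine le_antisymm ((Subgroup.closure_le _).2 ?_) Gamma0_two_le_closure
  rintro γ (rfl | rfl)
  exacts [T_mem_Gamma0 2, Gamma0_mem.2 (by decide)]

/-- In `SL(2,ℤ)`, the subgroup `Γ₀(2)` (matrices `[[a,b],[c,d]]` with `c ≡ 0 (mod 2)`)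
is generated by `T = [[1,1],[0,1]]` and `S T² S T = [[−1,−1],[2,1]]`. -/
theorem gamma0_two_generated_by_T_and_ST2ST :
    ∀ γ : Matrix.SpecialLinearGroup (Fin 2) ℤ,
      γ ∈ Subgroup.closure {Tmat, ST2STmat} ↔ (2 : ℤ) ∣ (γ : Matrix (Fin 2) (Fin 2) ℤ) 1 0 := by
  intro γ
  rw [closure_Tmat_ST2STmat_eq_Gamma0_two, mem_Gamma0_two_iff]
end

section
/- In SL(2,ℤ), the subgroup Γ⁰(2) is generated by the two matrices S T S = [[−1,0],[1,−1]] and T² S T S = [[1,−2],[1,−1]], where S = [[0,−1],[1,0]] and T = [[1,1],[0,1]]. -/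
open Matrix

/-- `S T S = [[−1,0],[1,−1]]` in `SL(2,ℤ)`, where `S = [[0,−1],[1,0]]`, `T = [[1,1],[0,1]]`. -/
def STSmat : Matrix.SpecialLinearGroup (Fin 2) ℤ :=
  ⟨!![-1, 0; 1, -1], by norm_num [Matrix.det_fin_two_of]⟩

/-- `T² S T S = [[1,−2],[1,−1]]` in `SL(2,ℤ)`. -/
def T2STSmat : Matrix.SpecialLinearGroup (Fin 2) ℤ :=
  ⟨!![1, -2; 1, -1], by norm_num [Matrix.det_fin_two_of]⟩

/-!
The closure `K` of `S T S` and `T² S T S` contains `T²`, `-1 = (S T S · T²)²` and the lower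
unipotent `S T S⁻¹ = -(S T S) = [[1,0],[-1,1]]`, and these already generate `Γ⁰(2)` by a
Euclidean descent. If `γ = [[a,b],[c,d]]` has `b` even then `a` is odd, since `ad - bc = 1`.
Left multiplication by a power of `T²` replaces `a` by `a + 2qc` with `|a + 2qc| ≤ |c|`, and
then left multiplication by a power of `S T S⁻¹` replaces `c` by its remainder modulo this
new `a`, which is nonzero because it is odd; so `|c|` strictly decreases while `b` stays even.
When `c = 0`, `γ = ±T^b` lies in `K`.
-/

open MatrixGroups ModularGroup Matrix.SpecialLinearGroup CongruenceSubgroup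

namespace Int

lemma exists_two_mul_abs_add_mul_le (a : ℤ) {m : ℤ} (hm : m ≠ 0) :
    ∃ q : ℤ, 2 * |a + q * m| ≤ |m| := by
  have hpos : 0 < m.natAbs := natAbs_pos.mpr hm
  refine ⟨-(a.bdiv m.natAbs * m.sign), ?_⟩
  have hr : a + -(a.bdiv m.natAbs * m.sign) * m = a.bmod m.natAbs := by
    rw [neg_mul, mul_assoc, sign_mul_self]
    linarith [bmod_add_bdiv a m.natAbs]
  have hle := bmod_le (x := a) hpos
  have hge := le_bmod (x := a) hpos
  rw [hr, ← natCast_natAbs, ← natCast_natAbs m]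
  omega

lemma exists_abs_sub_mul_lt_of_odd {a c : ℤ} (ha : Odd a) (hc : c ≠ 0) :
    ∃ q n : ℤ, |c - n * (a + q * (2 * c))| < |c| := by
  obtain ⟨q, hq⟩ := exists_two_mul_abs_add_mul_le a (mul_ne_zero two_ne_zero hc)
  set a₁ := a + q * (2 * c)
  have ha₁ : a₁ ≠ 0 := fun h ↦ not_even_iff_odd.mpr ha ⟨-(q * c), by linear_combination h⟩
  refine ⟨q, c / a₁, ?_⟩
  have hmod : c - c / a₁ * a₁ = c % a₁ := by rw [emod_def]; ring
  rw [hmod, abs_of_nonneg (emod_nonneg c ha₁)]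
  rw [abs_mul, abs_two] at hq
  linarith [emod_lt_abs c ha₁]

end Int

namespace ModularGroup

lemma T_zpow_mul_apply_zero (n : ℤ) (g : SL(2, ℤ)) (j : Fin 2) :
    (T ^ n * g) 0 j = g 0 j + n * g 1 j := by
  simp [coe_T_zpow, Matrix.mul_apply, Fin.sum_univ_two]

lemma coe_S_mul_T_zpow_mul_S_inv (n : ℤ) : ↑(S * T ^ n * S⁻¹) = !![1, 0; -n, 1] := by
  simp [S_inv, coe_T_zpow]

lemma S_mul_T_zpow_mul_S_inv_mul_apply_zero (n : ℤ) (g : SL(2, ℤ)) (j : Fin 2) :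
    (S * T ^ n * S⁻¹ * g) 0 j = g 0 j := by
  rw [coe_mul, coe_S_mul_T_zpow_mul_S_inv]
  simp [Matrix.mul_apply, Fin.sum_univ_two]

lemma S_mul_T_zpow_mul_S_inv_mul_apply_one (n : ℤ) (g : SL(2, ℤ)) (j : Fin 2) :
    (S * T ^ n * S⁻¹ * g) 1 j = g 1 j - n * g 0 j := by
  rw [coe_mul, coe_S_mul_T_zpow_mul_S_inv]
  simp only [Matrix.mul_apply, Fin.sum_univ_two, of_apply, cons_val', cons_val_fin_one,
    cons_val_zero, cons_val_one, neg_mul, one_mul]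
  ring

lemma eq_T_zpow_or_eq_neg_T_zpow_of_apply_one_zero {g : SL(2, ℤ)} (hc : g 1 0 = 0) :
    g = T ^ g 0 1 ∨ g = -T ^ (-g 0 1) := by
  have had := g.det_coe
  rw [Matrix.det_fin_two, hc, mul_zero, sub_zero] at had
  rcases Int.eq_one_or_neg_one_of_mul_eq_one' had with ⟨ha, hd⟩ | ⟨ha, hd⟩
  · left; ext i j; fin_cases i <;> fin_cases j <;> simp [ha, hc, hd, coe_T_zpow]
  · right; ext i j; fin_cases i <;> fin_cases j <;> simp [ha, hc, hd, coe_T_zpow]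

end ModularGroup

namespace CongruenceSubgroup

/-- `Γ⁰(N)`, the conjugate of `Γ₀(N)` by `S`: conjugation by `S` moves the upper right entry to
the lower left one, up to sign. -/
def GammaUpper0 (N : ℕ) : Subgroup SL(2, ℤ) :=
  (Gamma0 N).comap (MulAut.conj S).toMonoidHom

lemma mem_GammaUpper0 {N : ℕ} {γ : SL(2, ℤ)} : γ ∈ GammaUpper0 N ↔ (N : ℤ) ∣ γ 0 1 := by
  have h : (S * γ * S⁻¹) 1 0 = -γ 0 1 := by
    simp [S_inv, Matrix.vecMul, dotProduct, Matrix.mul_apply, Fin.sum_univ_two]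
  simp [GammaUpper0, Gamma0_mem, h, ZMod.intCast_zmod_eq_zero_iff_dvd]

lemma odd_apply_zero_zero_of_mem_GammaUpper0_two {γ : SL(2, ℤ)} (hγ : γ ∈ GammaUpper0 2) :
    Odd (γ 0 0) := by
  obtain ⟨b, hb⟩ := mem_GammaUpper0.mp hγ
  have hdet := γ.det_coe
  rw [Matrix.det_fin_two, hb] at hdet
  have hodd : Odd (γ 0 0 * γ 1 1) := ⟨b * γ 1 0, by push_cast at hdet; linear_combination hdet⟩
  exact (Int.odd_mul.mp hodd).1

lemma exists_mul_mem_GammaUpper0_two_natAbs_lt {γ : SL(2, ℤ)} (hγ : γ ∈ GammaUpper0 2)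
    (hc : γ 1 0 ≠ 0) :
    ∃ q n : ℤ, S * T ^ n * S⁻¹ * (T ^ (2 * q) * γ) ∈ GammaUpper0 2 ∧
      ((S * T ^ n * S⁻¹ * (T ^ (2 * q) * γ)) 1 0).natAbs < (γ 1 0).natAbs := by
  obtain ⟨q, n, hlt⟩ :=
    Int.exists_abs_sub_mul_lt_of_odd (odd_apply_zero_zero_of_mem_GammaUpper0_two hγ) hc
  refine ⟨q, n, ?_, ?_⟩
  · rw [mem_GammaUpper0, S_mul_T_zpow_mul_S_inv_mul_apply_zero, T_zpow_mul_apply_zero]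
    exact dvd_add (mem_GammaUpper0.mp hγ) ⟨q * γ 1 1, by push_cast; ring⟩
  · rw [S_mul_T_zpow_mul_S_inv_mul_apply_one, T_zpow_mul_apply_zero,
      congrFun (T_pow_mul_apply_one _ γ)]
    zify
    convert hlt using 2
    ring

theorem GammaUpper0_two_le {H : Subgroup SL(2, ℤ)} (hneg : -1 ∈ H) (hT : T ^ 2 ∈ H)
    (hL : S * T * S⁻¹ ∈ H) : GammaUpper0 2 ≤ H := by
  have hTpow (q : ℤ) : T ^ (2 * q) ∈ H := by
    rw [_root_.zpow_mul]
    exact zpow_mem hT q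
  have hLpow (n : ℤ) : S * T ^ n * S⁻¹ ∈ H := by
    rw [← conj_zpow]
    exact zpow_mem hL n
  intro γ hγ
  induction h : (γ 1 0).natAbs using Nat.strong_induction_on generalizing γ with
  | _ k ih =>
    rcases eq_or_ne (γ 1 0) 0 with hc | hc
    · obtain ⟨b, hb⟩ := mem_GammaUpper0.mp hγ
      rcases eq_T_zpow_or_eq_neg_T_zpow_of_apply_one_zero hc with hγT | hγT <;> rw [hγT, hb]
      · exact hTpow b
      · rw [neg_eq_neg_one_mul, ← mul_neg]
        exact mul_mem hneg (hTpow (-b))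
    · obtain ⟨q, n, hmem, hlt⟩ := exists_mul_mem_GammaUpper0_two_natAbs_lt hγ hc
      rw [show γ = (T ^ (2 * q))⁻¹ * (S * T ^ n * S⁻¹)⁻¹ *
          (S * T ^ n * S⁻¹ * (T ^ (2 * q) * γ)) by group]
      exact mul_mem (mul_mem (inv_mem (hTpow q)) (inv_mem (hLpow n))) (ih _ (h ▸ hlt) hmem rfl)

end CongruenceSubgroup

lemma STSmat_eq : STSmat = S * T * S := by
  ext i j; fin_cases i <;> fin_cases j <;> rfl

lemma T2STSmat_eq : T2STSmat = T ^ 2 * STSmat := by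
  ext i j; fin_cases i <;> fin_cases j <;> rfl

lemma neg_one_eq_STSmat_mul_T_sq_sq : -1 = (STSmat * T ^ 2) ^ 2 := by
  ext i j; fin_cases i <;> fin_cases j <;> rfl

lemma closure_STSmat_T2STSmat_eq_GammaUpper0_two :
    Subgroup.closure {STSmat, T2STSmat} = GammaUpper0 2 := by
  set K := Subgroup.closure {STSmat, T2STSmat}
  have hSTS : STSmat ∈ K := Subgroup.subset_closure (by simp)
  have hT2 : T ^ 2 ∈ K := by
    rw [show T ^ 2 = T2STSmat * STSmat⁻¹ by rw [T2STSmat_eq]; group]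
    exact mul_mem (Subgroup.subset_closure (by simp)) (inv_mem hSTS)
  have hneg : -1 ∈ K := by
    rw [neg_one_eq_STSmat_mul_T_sq_sq]
    exact pow_mem (mul_mem hSTS hT2) 2
  have hL : S * T * S⁻¹ ∈ K := by
    rw [S_inv, mul_neg, ← STSmat_eq, neg_eq_neg_one_mul]
    exact mul_mem hneg hSTS
  refine le_antisymm ?_ (GammaUpper0_two_le hneg hT2 hL)
  rw [Subgroup.closure_le]
  rintro γ (rfl | rfl) <;> rw [SetLike.mem_coe, mem_GammaUpper0] <;> simp [STSmat, T2STSmat]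

/-- In `SL(2,ℤ)`, the subgroup `Γ⁰(2)` (matrices `[[a,b],[c,d]]` with `b ≡ 0 (mod 2)`)
is generated by `S T S = [[−1,0],[1,−1]]` and `T² S T S = [[1,−2],[1,−1]]`. -/
theorem gammaUpper0_two_generated_by_STS_and_T2STS :
    ∀ γ : Matrix.SpecialLinearGroup (Fin 2) ℤ,
      γ ∈ Subgroup.closure {STSmat, T2STSmat} ↔ (2 : ℤ) ∣ (γ : Matrix (Fin 2) (Fin 2) ℤ) 0 1 := by
  intro γ
  rw [closure_STSmat_T2STSmat_eq_GammaUpper0_two, mem_GammaUpper0, Nat.cast_ofNat]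
end
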